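/- Define the marginal density p_t(u) = ∫_Z p_t(u | z) dq(z) and, at points where p_t(u) > 0, the marginal vector field G_t(u) = (∫_Z G_t(u | z) · p_t(u | z) dq(z)) / p_t(u). Then at every (t, u) with p_t(u) > 0 the marginal pair satisfies the continuity equation ∂_t p_t(u) + div_u (p_t · G_t)(u) = 0. -/

import Mathlib

/-!
The marginal flux `p_t · G_t` is, by construction, the `q`-average of the conditional fluxes
`p_t(·|z) G_t(·|z)`; the only subtlety is the junk value `0⁻¹ = 0` where the marginal density
vanishes, but there every conditional density vanishes `q`-a.e. and so does the averaged flux.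
Once derivative and divergence are moved inside the integral, the marginal continuity equation is
the `q`-average of the conditional ones.
-/

open MeasureTheory

/-- The divergence of a vector field `F : ℝ^d → ℝ^d` at a point `u`:
`div F (u) = ∑ i, ∂F_i/∂x_i (u)`. -/
noncomputable def divergence {d : ℕ} (F : (Fin d → ℝ) → (Fin d → ℝ))
    (u : Fin d → ℝ) : ℝ :=
  ∑ i : Fin d, fderiv ℝ F u (Pi.single i 1) i

section MarginalFlux

variable {Z E : Type*} [MeasurableSpace Z] {q : Measure Z}
  [NormedAddCommGroup E] [NormedSpace ℝ E] {f : Z → ℝ} {g : Z → E}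

theorem integral_smul_eq_zero_of_integral_eq_zero (hf_nonneg : ∀ z, 0 ≤ f z)
    (hf : Integrable f q) (h0 : ∫ z, f z ∂q = 0) : ∫ z, f z • g z ∂q = 0 := by
  have hf_ae : f =ᵐ[q] 0 := (integral_eq_zero_iff_of_nonneg hf_nonneg hf).mp h0
  refine integral_eq_zero_of_ae ?_
  filter_upwards [hf_ae] with z hz
  simp [hz]

theorem integral_smul_inv_smul_integral_smul (hf_nonneg : ∀ z, 0 ≤ f z)
    (hf : Integrable f q) :
    (∫ z, f z ∂q) • ((∫ z, f z ∂q)⁻¹ • ∫ z, f z • g z ∂q) = ∫ z, f z • g z ∂q := by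
  rcases eq_or_ne (∫ z, f z ∂q) 0 with h0 | h0
  · rw [h0, integral_smul_eq_zero_of_integral_eq_zero hf_nonneg hf h0, zero_smul]
  · exact smul_inv_smul₀ h0 _

end MarginalFlux

theorem integral_add_eq_zero_of_ae {Z : Type*} [MeasurableSpace Z] {q : Measure Z}
    {f g : Z → ℝ} (hf : Integrable f q) (hg : Integrable g q) (h : ∀ᵐ z ∂q, f z + g z = 0) :
    ∫ z, f z ∂q + ∫ z, g z ∂q = 0 := by
  rw [← integral_add hf hg]
  exact integral_eq_zero_of_ae h

theorem marginal_continuity_equation_general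
    {d : ℕ}
    {Z : Type*} [MeasurableSpace Z] (q : Measure Z)
    (p : ℝ → (Fin d → ℝ) → Z → ℝ)
    (G : ℝ → (Fin d → ℝ) → Z → (Fin d → ℝ))
    (hp_nonneg : ∀ t u z, 0 ≤ p t u z)
    (hcond : ∀ᵐ z ∂q,
      ContDiff ℝ 1 (fun tu : ℝ × (Fin d → ℝ) => p tu.1 tu.2 z) ∧
      ContDiff ℝ 1 (fun tu : ℝ × (Fin d → ℝ) => G tu.1 tu.2 z) ∧
      ∀ t ∈ Set.Icc (0 : ℝ) 1, ∀ u : Fin d → ℝ,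
        deriv (fun s => p s u z) t + divergence (fun x => p t x z • G t x z) u = 0)
    (hcomm_t : ∀ t ∈ Set.Icc (0 : ℝ) 1, ∀ u : Fin d → ℝ,
      deriv (fun s => ∫ z, p s u z ∂q) t = ∫ z, deriv (fun s => p s u z) t ∂q)
    (hcomm_div : ∀ t ∈ Set.Icc (0 : ℝ) 1, ∀ u : Fin d → ℝ,
      divergence (fun x => ∫ z, p t x z • G t x z ∂q) u
        = ∫ z, divergence (fun x => p t x z • G t x z) u ∂q)
    (hint₁ : ∀ t ∈ Set.Icc (0 : ℝ) 1, ∀ u : Fin d → ℝ,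
      Integrable (fun z => p t u z) q)
    (hint₃ : ∀ t ∈ Set.Icc (0 : ℝ) 1, ∀ u : Fin d → ℝ,
      Integrable (fun z => deriv (fun s => p s u z) t) q)
    (hint₄ : ∀ t ∈ Set.Icc (0 : ℝ) 1, ∀ u : Fin d → ℝ,
      Integrable (fun z => divergence (fun x => p t x z • G t x z) u) q) :
    ∀ t ∈ Set.Icc (0 : ℝ) 1, ∀ u : Fin d → ℝ,
      0 < ∫ z, p t u z ∂q →
      deriv (fun s => ∫ z, p s u z ∂q) t
        + divergence (fun x =>
            (∫ z, p t x z ∂q) •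
              ((∫ z, p t x z ∂q)⁻¹ • ∫ z, p t x z • G t x z ∂q)) u = 0 := by
  intro t ht u _
  have marginal_flux : (fun x => (∫ z, p t x z ∂q) •
      ((∫ z, p t x z ∂q)⁻¹ • ∫ z, p t x z • G t x z ∂q))
      = fun x => ∫ z, p t x z • G t x z ∂q :=
    funext fun x => integral_smul_inv_smul_integral_smul (hp_nonneg t x) (hint₁ t ht x)
  rw [marginal_flux, hcomm_div t ht u, hcomm_t t ht u]
  refine integral_add_eq_zero_of_ae (hint₃ t ht u) (hint₄ t ht u) ?_
  filter_upwards [hcond] with z ⟨_, _, hce⟩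
  exact hce t ht u

/-- **The marginal probability path and marginal vector field satisfy the continuity
equation.**  Let `(Z, q)` be a probability space, `p_t(·|z)` a family of conditional
probability densities on `ℝ^d` and `G_t(·|z)` a family of conditional vector fields such
that (i) for `q`-a.e. `z` the pair `(p_t(·|z), G_t(·|z))` is `C¹` in `(t,u)` and satisfies
the continuity equation `∂_t p_t(u|z) + div_u (p_t(·|z) G_t(·|z))(u) = 0`; (ii) the time
derivative and the spatial divergence commute with the `z`-integral; (iii) all displayed
integrals are finite.  Define the marginal density `p_t(u) = ∫ p_t(u|z) dq(z)` and, where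
`p_t(u) > 0`, the marginal vector field
`G_t(u) = (∫ G_t(u|z) p_t(u|z) dq(z)) / p_t(u)`.  Then at every `(t,u)` with `p_t(u) > 0`,
`∂_t p_t(u) + div_u (p_t G_t)(u) = 0`. -/
theorem marginal_continuity_equation
    {d : ℕ} (hd : 1 ≤ d)
    {Z : Type*} [MeasurableSpace Z] (q : Measure Z) [IsProbabilityMeasure q]
    (p : ℝ → (Fin d → ℝ) → Z → ℝ)
    (G : ℝ → (Fin d → ℝ) → Z → (Fin d → ℝ))
    (hp_nonneg : ∀ t u z, 0 ≤ p t u z)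
    (hp_prob : ∀ t ∈ Set.Icc (0 : ℝ) 1, ∀ z : Z, ∫ u : Fin d → ℝ, p t u z = 1)
    (hcond : ∀ᵐ z ∂q,
      ContDiff ℝ 1 (fun tu : ℝ × (Fin d → ℝ) => p tu.1 tu.2 z) ∧
      ContDiff ℝ 1 (fun tu : ℝ × (Fin d → ℝ) => G tu.1 tu.2 z) ∧
      ∀ t ∈ Set.Icc (0 : ℝ) 1, ∀ u : Fin d → ℝ,
        deriv (fun s => p s u z) t + divergence (fun x => p t x z • G t x z) u = 0)
    (hcomm_t : ∀ t ∈ Set.Icc (0 : ℝ) 1, ∀ u : Fin d → ℝ,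
      deriv (fun s => ∫ z, p s u z ∂q) t = ∫ z, deriv (fun s => p s u z) t ∂q)
    (hcomm_div : ∀ t ∈ Set.Icc (0 : ℝ) 1, ∀ u : Fin d → ℝ,
      divergence (fun x => ∫ z, p t x z • G t x z ∂q) u
        = ∫ z, divergence (fun x => p t x z • G t x z) u ∂q)
    (hint₁ : ∀ t ∈ Set.Icc (0 : ℝ) 1, ∀ u : Fin d → ℝ,
      Integrable (fun z => p t u z) q)
    (hint₂ : ∀ t ∈ Set.Icc (0 : ℝ) 1, ∀ u : Fin d → ℝ,
      Integrable (fun z => p t u z • G t u z) q)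
    (hint₃ : ∀ t ∈ Set.Icc (0 : ℝ) 1, ∀ u : Fin d → ℝ,
      Integrable (fun z => deriv (fun s => p s u z) t) q)
    (hint₄ : ∀ t ∈ Set.Icc (0 : ℝ) 1, ∀ u : Fin d → ℝ,
      Integrable (fun z => divergence (fun x => p t x z • G t x z) u) q) :
    ∀ t ∈ Set.Icc (0 : ℝ) 1, ∀ u : Fin d → ℝ,
      0 < ∫ z, p t u z ∂q →
      deriv (fun s => ∫ z, p s u z ∂q) t
        + divergence (fun x =>
            (∫ z, p t x z ∂q) •
              ((∫ z, p t x z ∂q)⁻¹ • ∫ z, p t x z • G t x z ∂q)) u = 0 :=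
  marginal_continuity_equation_general q p G hp_nonneg hcond hcomm_t hcomm_div hint₁ hint₃ hint₄
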